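/- arXiv:1208.2731 — 6 statements merged into one kernel-verified Lean document; each statement's English description precedes it below -/
import Mathlib

section
/- Let n ≥ 2 and let p_1(z),...,p_m(z) be homogeneous polynomials of degree d ≥ 1 in z = (z_1,...,z_n) ∈ ℂⁿ that are linearly independent in ℂ[z]. Let S be the complex vector space of homogeneous polynomials r(z) of degree d−1 for which there exists a complex m×n matrix Q such that the polynomial identity p(z)Q = r(z)z holds (i.e. Σ_{j=1}^m p_j(z) Q_{jν} = r(z) z_ν for ν = 1,...,n). If for some integer k with 0 ≤ k ≤ n−1 one has m < Σ_{j=0}^{k} (n−j), then dim_ℂ S ≤ k. -/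
/-!
Every `r ∈ S` satisfies `r * X ν ∈ P := span {p_j}` for all `ν`, so it suffices to bound
`dim W` for any space `W` with `W · X_ν ⊆ P`. Fix a monomial order: the dimension of a space of
polynomials is the number of leading exponents of its nonzero elements. If `dim W > k`, pick
`k + 1` distinct leading exponents `μ_0, …, μ_k` of `W`. All `μ_i + e_ν` are leading exponents
of `P`, and two distinct `μ_i, μ_j` share at most one such shift, so there are at least
`∑_{j ≤ k} (n - j)` of them, forcing `dim P > m`.
-/

open Finset MvPolynomial

universe u v

namespace Finsupp

variable {σ : Type*} [DecidableEq σ]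

theorem eq_of_add_single_eq_add_single {a b : σ →₀ ℕ} (hab : a ≠ b) {i i' j j' : σ}
    (hi : a + single i 1 = b + single i' 1) (hj : a + single j 1 = b + single j' 1) :
    i = j := by
  have hii' : i ≠ i' := by
    rintro rfl
    exact hab (add_right_cancel hi)
  have hsum : single i 1 + single j' 1 = single j 1 + single i' 1 := by
    have h : a + single i 1 + single j' 1 = a + single j 1 + single i' 1 := by
      rw [hi, hj, add_right_comm]
    rwa [add_assoc, add_assoc, add_right_inj] at h
  by_contra hij
  have h := DFunLike.congr_fun hsum i
  simp [single_apply, hij, hii'] at h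

variable [Fintype σ]

noncomputable def unitShifts (a : σ →₀ ℕ) : Finset (σ →₀ ℕ) :=
  univ.image fun i => a + single i 1

theorem mem_unitShifts {a μ : σ →₀ ℕ} : μ ∈ unitShifts a ↔ ∃ i, a + single i 1 = μ := by
  simp [unitShifts]

theorem card_unitShifts (a : σ →₀ ℕ) : #(unitShifts a) = Fintype.card σ :=
  card_image_of_injective _ fun _ _ h => single_left_injective one_ne_zero (add_left_cancel h)

theorem card_unitShifts_inter_le_one {a b : σ →₀ ℕ} (hab : a ≠ b) :
    #(unitShifts a ∩ unitShifts b) ≤ 1 := by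
  rw [card_le_one]
  simp only [mem_inter, mem_unitShifts]
  rintro _ ⟨⟨i, rfl⟩, i', hi⟩ _ ⟨⟨j, rfl⟩, j', hj⟩
  rw [eq_of_add_single_eq_add_single hab hi.symm hj.symm]

theorem sum_range_card_sub_le_card_biUnion_unitShifts (A : Finset (σ →₀ ℕ)) :
    ∑ j ∈ range #A, (Fintype.card σ - j) ≤ #(A.biUnion unitShifts) := by
  induction A using Finset.induction_on with
  | empty => simp
  | insert a A ha ih =>
    have hinter : #(unitShifts a ∩ A.biUnion unitShifts) ≤ #A := by
      rw [inter_biUnion]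
      refine card_biUnion_le.trans (card_eq_sum_ones A ▸ Finset.sum_le_sum fun b hb => ?_)
      exact card_unitShifts_inter_le_one fun h => ha (h ▸ hb)
    have hinter' : #(unitShifts a ∩ A.biUnion unitShifts) ≤ #(unitShifts a) :=
      card_le_card inter_subset_left
    have hunion := card_union_add_card_inter (unitShifts a) (A.biUnion unitShifts)
    rw [biUnion_insert, card_insert_of_notMem ha, sum_range_succ]
    rw [card_unitShifts] at hinter' hunion
    omega

end Finsupp

namespace MonomialOrder

variable {σ : Type u} (m : MonomialOrder σ)

theorem linearIndependent_of_injective_degree {R ι : Type*} [CommRing R] [NoZeroDivisors R]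
    {f : ι → MvPolynomial σ R} (hf : ∀ i, f i ≠ 0) (hinj : Function.Injective (m.degree ∘ f)) :
    LinearIndependent R f := by
  classical
  rw [linearIndependent_iff]
  intro l hl
  by_contra hne
  obtain ⟨i₀, hi₀, hmax⟩ := l.support.exists_max_image (fun i => m.toSyn (m.degree (f i)))
    (Finsupp.support_nonempty_iff.mpr hne)
  have hcoeff : coeff (m.degree (f i₀)) (Finsupp.linearCombination R f l) =
      l i₀ * m.leadingCoeff (f i₀) := by
    rw [Finsupp.linearCombination_apply, Finsupp.sum, coeff_sum,
      Finset.sum_eq_single_of_mem i₀ hi₀]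
    · rw [coeff_smul, smul_eq_mul, leadingCoeff]
    · intro i hi hne
      rw [coeff_smul, m.coeff_eq_zero_of_lt, smul_zero]
      exact (hmax i hi).lt_of_ne fun h => hne (hinj (m.toSyn.injective h))
  rw [hl, coeff_zero] at hcoeff
  exact mul_ne_zero (Finsupp.mem_support_iff.mp hi₀) (m.leadingCoeff_ne_zero_iff.mpr (hf i₀))
    hcoeff.symm

variable {K : Type v} [Field K]

def degreeSet (V : Submodule K (MvPolynomial σ K)) : Set (σ →₀ ℕ) :=
  m.degree '' ((V : Set (MvPolynomial σ K)) \ {0})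

theorem rank_eq_lift_card_degreeSet (V : Submodule K (MvPolynomial σ K)) :
    Module.rank K V = Cardinal.lift.{v} (Cardinal.mk (m.degreeSet V)) := by
  apply le_antisymm
  · let restrict : V →ₗ[K] (m.degreeSet V →₀ K) :=
      Finsupp.lcomapDomain _ Subtype.val_injective ∘ₗ
        (basisMonomials σ K).repr.toLinearMap ∘ₗ V.subtype
    have hinj : Function.Injective restrict := by
      rw [← LinearMap.ker_eq_bot, Submodule.eq_bot_iff]
      intro v hv
      by_contra hne
      have hv0 : (v : MvPolynomial σ K) ≠ 0 := by simpa using hne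
      have := DFunLike.congr_fun hv ⟨m.degree (v : MvPolynomial σ K), v, ⟨v.2, hv0⟩, rfl⟩
      exact m.coeff_degree_ne_zero_iff.mpr hv0 this
    simpa using restrict.rank_le_of_injective hinj
  · have hD : ∀ μ : m.degreeSet V, ∃ f ∈ (V : Set (MvPolynomial σ K)) \ {0}, m.degree f = μ :=
      fun μ => μ.2
    choose f hfV hdeg using hD
    have hli : LinearIndependent K f :=
      m.linearIndependent_of_injective_degree (fun μ => (hfV μ).2)
        fun μ ν h => Subtype.ext ((hdeg μ).symm.trans (h.trans (hdeg ν)))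
    have hliV : LinearIndependent K fun μ => (⟨f μ, (hfV μ).1⟩ : V) := .of_comp V.subtype hli
    have := hliV.cardinal_lift_le_rank
    rwa [Cardinal.lift_umax.{u, v}, Cardinal.lift_id'.{u, v}] at this

theorem add_single_mem_degreeSet {V W : Submodule K (MvPolynomial σ K)} {i : σ}
    (hWV : ∀ r ∈ W, r * X i ∈ V) {μ : σ →₀ ℕ} (hμ : μ ∈ m.degreeSet W) :
    μ + Finsupp.single i 1 ∈ m.degreeSet V := by
  obtain ⟨r, ⟨hrW, hr0⟩, rfl⟩ := hμ
  have hr0 : r ≠ 0 := hr0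
  refine ⟨r * X i, ⟨hWV r hrW, mul_ne_zero hr0 (X_ne_zero i)⟩, ?_⟩
  rw [m.degree_mul hr0 (X_ne_zero i), m.degree_X]

end MonomialOrder

theorem MvPolynomial.sum_range_sub_le_rank_of_mul_X_mem {σ K : Type*} [Fintype σ] [Field K]
    {V W : Submodule K (MvPolynomial σ K)} (hWV : ∀ r ∈ W, ∀ i, r * X i ∈ V) {k : ℕ}
    (hk : k < Module.rank K W) :
    ((∑ j ∈ range (k + 1), (Fintype.card σ - j) : ℕ) : Cardinal) ≤ Module.rank K V := by
  classical
  -- any monomial order works; `lex` just needs some linear order on the variables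
  let _ : LinearOrder σ := LinearOrder.lift' _ (Fintype.equivFin σ).injective
  let m : MonomialOrder σ := .lex
  rw [m.rank_eq_lift_card_degreeSet, Cardinal.nat_lt_lift_iff, ← Order.succ_le_iff,
    Cardinal.succ_natCast, ← Nat.cast_add_one, Cardinal.le_mk_iff_exists_subset] at hk
  rw [m.rank_eq_lift_card_degreeSet, Cardinal.nat_le_lift_iff]
  obtain ⟨_, hAW, hA⟩ := hk
  obtain ⟨A, rfl, hcardA⟩ := Cardinal.mk_set_eq_nat_iff_finset.mp hA
  have hshift : ↑(A.biUnion Finsupp.unitShifts) ⊆ m.degreeSet V := by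
    intro μ hμ
    obtain ⟨a, ha, hμ⟩ := mem_biUnion.mp hμ
    obtain ⟨i, rfl⟩ := Finsupp.mem_unitShifts.mp hμ
    exact m.add_single_mem_degreeSet (fun r hr => hWV r hr i) (hAW ha)
  calc ((∑ j ∈ range (k + 1), (Fintype.card σ - j) : ℕ) : Cardinal)
      ≤ #(A.biUnion Finsupp.unitShifts) := by
        rw [← hcardA]
        exact_mod_cast Finsupp.sum_range_card_sub_le_card_biUnion_unitShifts A
    _ ≤ Cardinal.mk (m.degreeSet V) := by
        simpa using Cardinal.mk_le_mk_of_subset hshift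

theorem dim_S_le_k_general (n m d k : ℕ)
    (p : Fin m → MvPolynomial (Fin n) ℂ)
    (hm : m < ∑ j ∈ Finset.range (k + 1), (n - j)) :
    Module.rank ℂ
      ↥(Submodule.span ℂ {r : MvPolynomial (Fin n) ℂ |
          r.IsHomogeneous (d - 1) ∧
          ∃ Q : Matrix (Fin m) (Fin n) ℂ,
            ∀ ν : Fin n, (∑ j, Q j ν • p j) = r * X ν}) ≤ k := by
  set P := Submodule.span ℂ (Set.range p)
  have hP : Module.rank ℂ P ≤ m :=
    (rank_span_le _).trans (Cardinal.mk_range_le.trans (by simp))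
  by_contra! hk
  have hcount := MvPolynomial.sum_range_sub_le_rank_of_mul_X_mem (V := P) ?_ hk
  · rw [Fintype.card_fin] at hcount
    exact (hcount.trans hP).not_gt (by exact_mod_cast hm)
  · intro r hr ν
    refine (Submodule.span_le (p := P.comap (LinearMap.mulRight ℂ (X ν)))).mpr ?_ hr
    rintro r ⟨-, Q, hQ⟩
    rw [SetLike.mem_coe, Submodule.mem_comap, LinearMap.mulRight_apply, ← hQ ν]
    exact Submodule.sum_mem _ fun j _ => Submodule.smul_mem _ _ (Submodule.subset_span ⟨j, rfl⟩)

/-- **Lemma (dim S ≤ k).** Let `p_1,...,p_m` be homogeneous polynomials of degree `d ≥ 1`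
in `n ≥ 2` complex variables, linearly independent over `ℂ`.  If
`m < ∑_{j=0}^{k} (n-j)` for some `0 ≤ k ≤ n-1`, then the space `S` of homogeneous
polynomials `r` of degree `d-1` admitting a matrix `Q` with `p(z)Q = r(z)z`
has dimension at most `k`. -/
theorem dim_S_le_k (n m d k : ℕ) (hn : 2 ≤ n) (hd : 1 ≤ d) (hk : k ≤ n - 1)
    (p : Fin m → MvPolynomial (Fin n) ℂ)
    (hhom : ∀ j, (p j).IsHomogeneous d)
    (hli : LinearIndependent ℂ p)
    (hm : m < ∑ j ∈ Finset.range (k + 1), (n - j)) :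
    Module.rank ℂ
      ↥(Submodule.span ℂ {r : MvPolynomial (Fin n) ℂ |
          r.IsHomogeneous (d - 1) ∧
          ∃ Q : Matrix (Fin m) (Fin n) ℂ,
            ∀ ν : Fin n, (∑ j, Q j ν • p j) = r * X ν}) ≤ k :=
  dim_S_le_k_general n m d k p hm
end

section
/- Let n ≥ 2 and let p_1(z),...,p_m(z) be homogeneous polynomials of degree d ≥ 1 in z = (z_1,...,z_n) ∈ ℂⁿ that are linearly independent in ℂ[z]. If a complex m×n matrix Q and a homogeneous polynomial r(z) of degree d−1 with r ≢ 0 satisfy the polynomial identity p(z)Q = r(z)z, then the matrix Q has rank n; in particular m ≥ n. -/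
/-!
If `Q c = 0`, contracting the identity `p(z) Q = r(z) z` with `c` gives `r(z) · ∑ c_ν z_ν = 0`.
Since `r ≠ 0` and the coordinates are linearly independent, `c = 0`; so `Q` is injective on `ℂⁿ`
and has rank `n ≤ m`.
-/

open MvPolynomial Matrix

theorem Matrix.rank_eq_card_width_of_injective {R m n : Type*} [CommRing R]
    [StrongRankCondition R] [Fintype m] [Fintype n] (A : Matrix m n R)
    (h : Function.Injective A.mulVecLin) : A.rank = Fintype.card n := by
  rw [Matrix.rank, LinearMap.finrank_range_of_inj h, Module.finrank_fintype_fun_eq_card]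

theorem Matrix.sum_smul_sum_smul_eq_sum_mulVec_smul {R M m n : Type*} [CommSemiring R]
    [AddCommMonoid M] [Module R M] [Fintype m] [Fintype n]
    (A : Matrix m n R) (p : m → M) (c : n → R) :
    ∑ i, c i • ∑ j, A j i • p j = ∑ j, (A *ᵥ c) j • p j := by
  simp_rw [Finset.smul_sum, smul_smul, Matrix.mulVec, dotProduct, Finset.sum_smul]
  rw [Finset.sum_comm]
  simp_rw [mul_comm]

theorem MvPolynomial.injective_mulVecLin_of_sum_smul_eq_mul_X {R ι σ : Type*} [CommRing R]
    [IsDomain R] [Fintype ι] [Fintype σ]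
    (Q : Matrix ι σ R) (p : ι → MvPolynomial σ R) {r : MvPolynomial σ R} (hr0 : r ≠ 0)
    (hsol : ∀ i, ∑ j, Q j i • p j = r * X i) :
    Function.Injective Q.mulVecLin := by
  rw [← LinearMap.ker_eq_bot, LinearMap.ker_eq_bot']
  intro c hc
  have hmul : r * ∑ i, c i • X i = 0 := by
    calc r * ∑ i, c i • X i = ∑ i, c i • ∑ j, Q j i • p j := by
          simp_rw [hsol, Finset.mul_sum, mul_smul_comm]
      _ = ∑ j, (Q *ᵥ c) j • p j := Q.sum_smul_sum_smul_eq_sum_mulVec_smul p c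
      _ = 0 := by simp [show Q *ᵥ c = 0 from hc]
  exact _root_.funext <| Fintype.linearIndependent_iff.mp (linearIndependent_X σ R) c
    ((mul_eq_zero.mp hmul).resolve_left hr0)

theorem rank_Q_eq_n_general (n m : ℕ)
    (p : Fin m → MvPolynomial (Fin n) ℂ)
    (Q : Matrix (Fin m) (Fin n) ℂ) (r : MvPolynomial (Fin n) ℂ)
    (hr0 : r ≠ 0)
    (hsol : ∀ ν : Fin n, (∑ j, Q j ν • p j) = r * X ν) :
    Q.rank = n ∧ n ≤ m := by
  have hrank : Q.rank = n := by
    simpa using Q.rank_eq_card_width_of_injective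
      (injective_mulVecLin_of_sum_smul_eq_mul_X Q p hr0 hsol)
  exact ⟨hrank, by simpa [hrank] using Q.rank_le_card_height⟩

/-- If `p_1,...,p_m` are linearly independent homogeneous polynomials of degree `d ≥ 1`
in `n ≥ 2` variables, and `(Q, r)` is a solution of `p(z)Q = r(z)z` with `r ≢ 0`
homogeneous of degree `d-1`, then the `m×n` matrix `Q` has rank `n`; in particular
`m ≥ n`. -/
theorem rank_Q_eq_n (n m d : ℕ) (hn : 2 ≤ n) (hd : 1 ≤ d)
    (p : Fin m → MvPolynomial (Fin n) ℂ)
    (hhom : ∀ j, (p j).IsHomogeneous d)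
    (hli : LinearIndependent ℂ p)
    (Q : Matrix (Fin m) (Fin n) ℂ) (r : MvPolynomial (Fin n) ℂ)
    (hr : r.IsHomogeneous (d - 1)) (hr0 : r ≠ 0)
    (hsol : ∀ ν : Fin n, (∑ j, Q j ν • p j) = r * X ν) :
    Q.rank = n ∧ n ≤ m :=
  rank_Q_eq_n_general n m p Q r hr0 hsol
end

section
/- Let n ≥ 2 and let p_1(z),...,p_m(z) be homogeneous polynomials of degree d ≥ 1 in z = (z_1,...,z_n) ∈ ℂⁿ that are linearly independent in ℂ[z], and write p(z) = (p_1(z),...,p_m(z)). Assume (Q^(1), r^(1)(z)), ..., (Q^(k), r^(k)(z)) are solutions of the polynomial identity p(z)Q = r(z)z such that the matrices Q^(1),...,Q^(k) are linearly independent in the space of complex m×n matrices. Let κ be the dimension of V = ker Q^(1) ∩ ... ∩ ker Q^(k), where ker Q = {v ∈ ℂ^m : vQ = 0}, and if κ ≥ 1 let v_1,...,v_κ ∈ ℂ^m be linearly independent vectors spanning V. Then there exist ℂ^m-valued linear (degree-one homogeneous) polynomial maps s^(1)(z),...,s^(k)(z) and polynomials h_1(z),...,h_κ(z) such that p(z)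 = Σ_{j=1}^κ h_j(z) v_j + Σ_{i=1}^k r^(i)(z) s^(i)(z), where the first sum is vacuous if κ = 0. -/
open MvPolynomial
open scoped Matrix

/-!
Stack the maps `u ↦ u Q⁽ⁱ⁾` into one linear map `A : ℂᵐ → ℂ^(k × n)`, whose kernel is
`V = span v`. Over a field `A` has a generalized inverse `S` (`A S A = A`), so `1 - S A` takes
values in `ker A = span v` and factors as `B T` with `B` the matrix of columns `vₐ`:
`1 = B T + S A`.
Applying this identity to the vector `p(z)` and using `A p(z) = (r⁽ⁱ⁾(z) z_ν)_(i,ν)` gives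
`p = ∑ₐ (T p)ₐ vₐ + ∑ᵢ r⁽ⁱ⁾ s⁽ⁱ⁾` with the linear forms `s⁽ⁱ⁾_j = ∑_ν S_(j,(i,ν)) z_ν`.
-/

section VectorSpace

variable {K M N P : Type*} [DivisionRing K] [AddCommGroup M] [Module K M]
  [AddCommGroup N] [Module K N] [AddCommGroup P] [Module K P]

theorem LinearMap.exists_comp_comp_self_eq_self (f : M →ₗ[K] N) :
    ∃ g : N →ₗ[K] M, f ∘ₗ g ∘ₗ f = f := by
  obtain ⟨g₀, hg₀⟩ := f.rangeRestrict.exists_rightInverse_of_surjective f.range_rangeRestrict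
  obtain ⟨g, hg⟩ := LinearMap.exists_extend g₀
  refine ⟨g, LinearMap.ext fun u => ?_⟩
  have := congr($hg₀ (f.rangeRestrict u))
  simp only [LinearMap.comp_apply, LinearMap.id_apply] at this
  simpa [← hg] using congr(Subtype.val $this)

theorem LinearMap.exists_comp_eq_of_range_le (f : M →ₗ[K] N) (g : P →ₗ[K] N)
    (h : LinearMap.range f ≤ LinearMap.range g) : ∃ θ : M →ₗ[K] P, g ∘ₗ θ = f := by
  obtain ⟨θ, hθ⟩ := Module.projective_lifting_property g.rangeRestrict (f.codRestrict _
    fun u => h ⟨u, rfl⟩) g.surjective_rangeRestrict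
  exact ⟨θ, LinearMap.ext fun u => congr(Subtype.val ($hθ u))⟩

theorem LinearMap.exists_comp_add_comp_eq_id_of_range_eq_ker (f : M →ₗ[K] N) (g : P →ₗ[K] M)
    (h : LinearMap.range g = LinearMap.ker f) :
    ∃ (θ : M →ₗ[K] P) (ψ : N →ₗ[K] M), g ∘ₗ θ + ψ ∘ₗ f = LinearMap.id := by
  obtain ⟨ψ, hψ⟩ := f.exists_comp_comp_self_eq_self
  have hrange : LinearMap.range (LinearMap.id - ψ ∘ₗ f) ≤ LinearMap.range g := by
    rintro _ ⟨u, rfl⟩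
    rw [h, LinearMap.mem_ker]
    simpa [sub_eq_zero] using congr($hψ u).symm
  obtain ⟨θ, hθ⟩ := (LinearMap.id - ψ ∘ₗ f).exists_comp_eq_of_range_le g hrange
  exact ⟨θ, ψ, by rw [hθ, sub_add_cancel]⟩

end VectorSpace

namespace Matrix

variable {K R ι m n ρ : Type*} [Fintype m]

theorem exists_mul_add_mul_eq_one_of_range_eq_ker [Fintype n] [Fintype ρ] [Field K]
    [DecidableEq m] [DecidableEq n] [DecidableEq ρ] (A : Matrix ρ m K) (B : Matrix m n K)
    (h : LinearMap.range B.mulVecLin = LinearMap.ker A.mulVecLin) :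
    ∃ (T : Matrix n m K) (S : Matrix m ρ K), B * T + S * A = 1 := by
  obtain ⟨θ, ψ, hθψ⟩ := A.mulVecLin.exists_comp_add_comp_eq_id_of_range_eq_ker _ h
  refine ⟨LinearMap.toMatrix' θ, LinearMap.toMatrix' ψ, toLin'.injective ?_⟩
  simpa [toLin'_mul, ← toLin'_apply'] using hθψ

theorem mulVec_map_eq_of_mul_add_mul_eq_one [Fintype n] [Fintype ρ] [DecidableEq m]
    [CommRing K] [CommRing R] (f : K →+* R)
    {A : Matrix ρ m K} {B : Matrix m n K} {T : Matrix n m K} {S : Matrix m ρ K}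
    (h : B * T + S * A = 1) (w : m → R) :
    w = B.map f *ᵥ (T.map f *ᵥ w) + S.map f *ᵥ (A.map f *ᵥ w) := by
  calc w = (B * T + S * A).map f *ᵥ w := by
        rw [h, Matrix.map_one f (map_zero f) (map_one f), one_mulVec]
    _ = _ := by
      rw [Matrix.map_add f (map_add f), Matrix.map_mul, Matrix.map_mul, add_mulVec,
        mulVec_mulVec, mulVec_mulVec]

def stackTranspose (Q : ι → Matrix m n R) : Matrix (ι × n) m R :=
  of fun x j => Q x.1 j x.2

theorem stackTranspose_mulVec [CommRing R] (Q : ι → Matrix m n R) (u : m → R) :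
    stackTranspose Q *ᵥ u = fun x => (u ᵥ* Q x.1) x.2 := by
  ext x
  simp [stackTranspose, mulVec, vecMul, dotProduct, mul_comm]

theorem ker_mulVecLin_stackTranspose [Fintype n] [CommRing R] (Q : ι → Matrix m n R) :
    LinearMap.ker (stackTranspose Q).mulVecLin = ⨅ i, LinearMap.ker (vecMulLinear (Q i)) := by
  ext u
  simp [stackTranspose_mulVec, funext_iff]

end Matrix

theorem p_decomposition_general (n m k κ : ℕ)
    (p : Fin m → MvPolynomial (Fin n) ℂ)
    (Q : Fin k → Matrix (Fin m) (Fin n) ℂ)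
    (r : Fin k → MvPolynomial (Fin n) ℂ)
    (hsol : ∀ i, ∀ ν : Fin n, (∑ j, Q i j ν • p j) = r i * X ν)
    (v : Fin κ → (Fin m → ℂ))
    (hvspan : Submodule.span ℂ (Set.range v)
        = ⨅ i, LinearMap.ker (Matrix.vecMulLinear (Q i))) :
    ∃ (s : Fin k → Fin m → MvPolynomial (Fin n) ℂ)
      (h : Fin κ → MvPolynomial (Fin n) ℂ),
      (∀ i j, (s i j).IsHomogeneous 1) ∧
      ∀ j, p j = (∑ a, C (v a j) * h a) + ∑ i, r i * s i j := by
  obtain ⟨T, S, hTS⟩ := Matrix.exists_mul_add_mul_eq_one_of_range_eq_ker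
    (Matrix.stackTranspose Q) (Matrix.of v)ᵀ
    (by rw [Matrix.range_mulVecLin, Matrix.ker_mulVecLin_stackTranspose, ← hvspan]; rfl)
  have hp : (Matrix.stackTranspose Q).map C *ᵥ p = fun x => r x.1 * X x.2 := by
    ext1 x
    simp only [Matrix.mulVec, dotProduct, Matrix.stackTranspose, Matrix.map_apply,
      Matrix.of_apply, ← smul_eq_C_mul, hsol]
  refine ⟨fun i j => ∑ ν, C (S j (i, ν)) * X ν, T.map C *ᵥ p,
    fun i j => IsHomogeneous.sum _ _ _ fun ν _ => isHomogeneous_C_mul_X _ ν, fun j => ?_⟩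
  rw [congrFun (Matrix.mulVec_map_eq_of_mul_add_mul_eq_one C hTS p) j, hp]
  simp only [Pi.add_apply, Matrix.mulVec, dotProduct, Fintype.sum_prod_type, Finset.mul_sum,
    Matrix.map_apply, Matrix.transpose_apply, Matrix.of_apply]
  rw [add_right_inj]
  exact Finset.sum_congr rfl fun i _ => Finset.sum_congr rfl fun ν _ => by ring

/-- **Lemma (prenewlemma1).** Let `p_1,...,p_m` be linearly independent homogeneous
polynomials of degree `d ≥ 1` in `n ≥ 2` variables.  Suppose `(Q^(1),r^(1)), ...,
(Q^(k),r^(k))` are solutions of `p(z)Q = r(z)z` with the matrices `Q^(i)` linearly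
independent.  Let `κ = dim (ker Q^(1) ∩ ... ∩ ker Q^(k))` (kernels for the action
`v ↦ vQ` on row vectors) and let `v_1,...,v_κ` be linearly independent vectors spanning
this intersection.  Then there are `ℂ^m`-valued linear polynomial maps
`s^(1)(z),...,s^(k)(z)` and polynomials `h_1(z),...,h_κ(z)` such that
`p(z) = ∑_a h_a(z) v_a + ∑_i r^(i)(z) s^(i)(z)`. -/
theorem p_decomposition (n m d k κ : ℕ) (hn : 2 ≤ n) (hd : 1 ≤ d)
    (p : Fin m → MvPolynomial (Fin n) ℂ)
    (hhom : ∀ j, (p j).IsHomogeneous d)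
    (hli : LinearIndependent ℂ p)
    (Q : Fin k → Matrix (Fin m) (Fin n) ℂ)
    (r : Fin k → MvPolynomial (Fin n) ℂ)
    (hr : ∀ i, (r i).IsHomogeneous (d - 1))
    (hsol : ∀ i, ∀ ν : Fin n, (∑ j, Q i j ν • p j) = r i * X ν)
    (hQli : LinearIndependent ℂ Q)
    (hκ : Module.finrank ℂ
        ↥(⨅ i, LinearMap.ker (Matrix.vecMulLinear (Q i))) = κ)
    (v : Fin κ → (Fin m → ℂ))
    (hvli : LinearIndependent ℂ v)
    (hvspan : Submodule.span ℂ (Set.range v)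
        = ⨅ i, LinearMap.ker (Matrix.vecMulLinear (Q i))) :
    ∃ (s : Fin k → Fin m → MvPolynomial (Fin n) ℂ)
      (h : Fin κ → MvPolynomial (Fin n) ℂ),
      (∀ i j, (s i j).IsHomogeneous 1) ∧
      ∀ j, p j = (∑ a, C (v a j) * h a) + ∑ i, r i * s i j :=
  p_decomposition_general n m k κ p Q r hsol v hvspan
end

section
/- Let n ≥ 2 and let p_1(z),...,p_m(z) be homogeneous polynomials of degree d ≥ 1 in z = (z_1,...,z_n) ∈ ℂⁿ that are linearly independent in ℂ[z], and suppose m < n. If a complex m×n matrix Q and a homogeneous polynomial r(z) of degree d−1 satisfy the polynomial identity p(z)Q = r(z)z, then r ≡ 0 and Q = 0. -/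
open MvPolynomial

/-- If `p_1,...,p_m` are linearly independent homogeneous polynomials of degree `d ≥ 1`
in `n ≥ 2` variables with `m < n`, then any solution `(Q, r)` of `p(z)Q = r(z)z` with
`r` homogeneous of degree `d-1` is trivial: `r ≡ 0` and `Q = 0`. -/
theorem trivial_solution_of_m_lt_n (n m d : ℕ) (hn : 2 ≤ n) (hd : 1 ≤ d) (hm : m < n)
    (p : Fin m → MvPolynomial (Fin n) ℂ)
    (hhom : ∀ j, (p j).IsHomogeneous d)
    (hli : LinearIndependent ℂ p)
    (Q : Matrix (Fin m) (Fin n) ℂ) (r : MvPolynomial (Fin n) ℂ)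
    (hr : r.IsHomogeneous (d - 1))
    (hsol : ∀ ν : Fin n, (∑ j, Q j ν • p j) = r * X ν) :
    r = 0 ∧ Q = 0 := by
  -- there is a nonzero vector in the kernel of Q
  have hker : LinearMap.ker Q.mulVecLin ≠ ⊥ := by
    apply LinearMap.ker_ne_bot_of_finrank_lt
    simpa using hm
  obtain ⟨c, hc0, hcne⟩ := Submodule.exists_mem_ne_zero_of_ne_bot hker
  rw [LinearMap.mem_ker] at hc0
  -- combine the equations with weights c
  have key : r * (∑ ν, c ν • X ν) = 0 := by
    have h1 : ∑ ν, c ν • (∑ j, Q j ν • p j) = ∑ ν, c ν • (r * X ν) := by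
      exact Finset.sum_congr rfl fun ν _ => by rw [hsol ν]
    have h2 : ∑ ν, c ν • (∑ j, Q j ν • p j) = ∑ j, (Q.mulVec c j) • p j := by
      simp_rw [Finset.smul_sum]
      rw [Finset.sum_comm]
      refine Finset.sum_congr rfl fun j _ => ?_
      rw [Matrix.mulVec, dotProduct, Finset.sum_smul]
      exact Finset.sum_congr rfl fun ν _ => by rw [smul_smul, mul_comm]
    have h3 : ∑ j, (Q.mulVec c j) • p j = 0 := by
      rw [show Q.mulVec c = Q.mulVecLin c from rfl, hc0]
      simp
    rw [Finset.mul_sum]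
    calc ∑ ν, r * c ν • X ν = ∑ ν, c ν • (r * X ν) := by
          refine Finset.sum_congr rfl fun ν _ => ?_
          rw [mul_smul_comm]
        _ = 0 := by rw [← h1, h2, h3]
  -- the linear form ∑ c ν • X ν is nonzero
  have hlin : (∑ ν, c ν • (X ν : MvPolynomial (Fin n) ℂ)) ≠ 0 := by
    obtain ⟨ν, hν⟩ := Function.ne_iff.mp hcne
    intro h
    apply hν
    have := congrArg (fun q => MvPolynomial.coeff (Finsupp.single ν 1) q) h
    simpa [MvPolynomial.coeff_sum, MvPolynomial.coeff_X', Finsupp.single_left_inj] using this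
  have hr0 : r = 0 := by
    rcases mul_eq_zero.mp key with h | h
    · exact h
    · exact absurd h hlin
  refine ⟨hr0, ?_⟩
  ext j ν
  have h4 : ∑ j, Q j ν • p j = 0 := by rw [hsol ν, hr0, zero_mul]
  exact Fintype.linearIndependent_iff.mp hli (fun j => Q j ν) h4 j
end

section
/- Let n ≥ 1 and l_0 ≥ 2 be integers, and let d_1 = 0 < d_2 < d_3 < ... < d_{l_0} = d be integers with d < n(n+1)/2. Then there exist integers k_2, k_3, ..., k_{l_0} with 0 ≤ k_l ≤ n−1 for each l such that d_l − d_{l−1} < Σ_{j=0}^{k_l} (n−j) for every l = 2,...,l_0, and Σ_{l=2}^{l_0} k_l < n. -/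
/-!
Let `g m = n + (n - 1) + ⋯ + (n - m + 1)`, so `g n = n(n+1)/2`. For each increment
`x_l = d_l - d_{l-1}` take `k_l` maximal with `g k_l ≤ x_l`, i.e. `g k_l ≤ x_l < g (k_l + 1)`.
Since `g` is monotone and subadditive, `∑ k_l ≥ n` would give
`g n ≤ g (∑ k_l) ≤ ∑ g k_l ≤ ∑ x_l ≤ d_{l₀} < g n`.
-/

open Finset

/-- Terms with `j ≥ n` vanish by truncated subtraction. -/
def descSum (n m : ℕ) : ℕ := ∑ j ∈ range m, (n - j)

lemma descSum_mono (n : ℕ) : Monotone (descSum n) := fun _ _ hab =>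
  sum_le_sum_of_subset (range_subset_range.mpr hab)

lemma descSum_add_le (n a b : ℕ) : descSum n (a + b) ≤ descSum n a + descSum n b := by
  simp only [descSum, sum_range_add]
  gcongr with j
  omega

lemma descSum_sum_le {ι : Type*} (n : ℕ) (s : Finset ι) (k : ι → ℕ) :
    descSum n (∑ i ∈ s, k i) ≤ ∑ i ∈ s, descSum n (k i) :=
  le_sum_of_subadditive (descSum n) le_rfl (descSum_add_le n) s k

lemma descSum_self (n : ℕ) : descSum n n = n * (n + 1) / 2 := by
  have reflect : descSum n n = ∑ j ∈ range n, (j + 1) := by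
    rw [descSum, ← sum_range_reflect]
    exact sum_congr rfl fun j hj => by rw [mem_range] at hj; omega
  rw [reflect, ← add_zero (∑ j ∈ range n, (j + 1)), ← sum_range_succ' (fun j => j) n, sum_range_id,
    Nat.add_sub_cancel, mul_comm]

lemma Nat.exists_le_lt_succ_of_le_of_lt {α : Type*} [LinearOrder α] {f : ℕ → α} {x : α} {N : ℕ}
    (h0 : f 0 ≤ x) (hN : x < f N) : ∃ k < N, f k ≤ x ∧ x < f (k + 1) := by
  set k := Nat.findGreatest (fun k => f k ≤ x) N
  have hk : f k ≤ x := Nat.findGreatest_spec (P := fun k => f k ≤ x) (Nat.zero_le N) h0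
  have hkN : k < N := lt_of_le_of_ne (Nat.findGreatest_le N) fun h => hN.not_ge (h ▸ hk)
  have hk_succ : ¬f (k + 1) ≤ x :=
    Nat.findGreatest_is_greatest (P := fun k => f k ≤ x) (lt_add_one k) hkN
  exact ⟨k, hkN, hk, not_le.mp hk_succ⟩

lemma exists_lt_descSum_succ_of_sum_lt {ι : Type*} (n : ℕ) (s : Finset ι) (x : ι → ℕ)
    (hx : ∑ i ∈ s, x i < descSum n n) :
    ∃ k : ι → ℕ, (∀ i ∈ s, k i < n ∧ x i < descSum n (k i + 1)) ∧ ∑ i ∈ s, k i < n := by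
  have bracket : ∀ i, ∃ k, i ∈ s → k < n ∧ descSum n k ≤ x i ∧ x i < descSum n (k + 1) := by
    intro i
    by_cases hi : i ∈ s
    · have hxi : x i < descSum n n := (single_le_sum (fun _ _ => Nat.zero_le _) hi).trans_lt hx
      obtain ⟨k, hk⟩ := Nat.exists_le_lt_succ_of_le_of_lt (f := descSum n) (Nat.zero_le (x i)) hxi
      exact ⟨k, fun _ => hk⟩
    · exact ⟨0, fun h => absurd h hi⟩
  choose k hk using bracket
  refine ⟨k, fun i hi => ⟨(hk i hi).1, (hk i hi).2.2⟩, ?_⟩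
  by_contra! hsum
  have : descSum n n ≤ ∑ i ∈ s, x i := calc
    descSum n n ≤ descSum n (∑ i ∈ s, k i) := descSum_mono n hsum
    _ ≤ ∑ i ∈ s, descSum n (k i) := descSum_sum_le n s k
    _ ≤ ∑ i ∈ s, x i := sum_le_sum fun i hi => (hk i hi).2.1
  exact hx.not_ge this

lemma sum_Icc_two_tsub_le (d : ℕ → ℕ) (m : ℕ) (hmono : ∀ l, 2 ≤ l → l ≤ m → d (l - 1) ≤ d l) :
    ∑ l ∈ Icc 2 m, (d l - d (l - 1)) ≤ d m := by
  induction m with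
  | zero => simp
  | succ m ih =>
    rcases Nat.eq_zero_or_pos m with rfl | hm
    · simp
    have step : d m ≤ d (m + 1) := hmono (m + 1) (by omega) le_rfl
    have hprefix := ih fun l hl hlm => hmono l hl (by omega)
    rw [sum_Icc_succ_top (by omega), Nat.add_sub_cancel]
    omega

theorem exists_k_of_small_codim_general (n l₀ : ℕ)
    (d : ℕ → ℕ)
    (hmono : ∀ l, 2 ≤ l → l ≤ l₀ → d (l - 1) < d l)
    (hd : d l₀ < n * (n + 1) / 2) :
    ∃ k : ℕ → ℕ,
      (∀ l, 2 ≤ l → l ≤ l₀ →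
        k l ≤ n - 1 ∧
        d l - d (l - 1) < ∑ j ∈ Finset.range (k l + 1), (n - j)) ∧
      (∑ l ∈ Finset.Icc 2 l₀, k l) < n := by
  have hsum : ∑ l ∈ Icc 2 l₀, (d l - d (l - 1)) < descSum n n := by
    rw [descSum_self]
    exact (sum_Icc_two_tsub_le d l₀ fun l hl hll => (hmono l hl hll).le).trans_lt hd
  obtain ⟨k, hk, hksum⟩ := exists_lt_descSum_succ_of_sum_lt n _ _ hsum
  refine ⟨k, fun l hl hll => ?_, hksum⟩
  obtain ⟨hkn, hdk⟩ := hk l (mem_Icc.mpr ⟨hl, hll⟩)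
  exact ⟨by omega, hdk⟩

/-- If `n ≥ 1`, `l_0 ≥ 2`, and `d_1 = 0 < d_2 < ... < d_{l_0}` are integers with
`d_{l_0} < n(n+1)/2`, then there exist integers `k_2,...,k_{l_0}` with
`0 ≤ k_l ≤ n-1`, `d_l − d_{l−1} < ∑_{j=0}^{k_l}(n−j)` for each `l = 2,...,l_0`, and
`∑_{l=2}^{l_0} k_l < n`. -/
theorem exists_k_of_small_codim (n l₀ : ℕ) (hn : 1 ≤ n) (hl₀ : 2 ≤ l₀)
    (d : ℕ → ℕ) (hd1 : d 1 = 0)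
    (hmono : ∀ l, 2 ≤ l → l ≤ l₀ → d (l - 1) < d l)
    (hd : d l₀ < n * (n + 1) / 2) :
    ∃ k : ℕ → ℕ,
      (∀ l, 2 ≤ l → l ≤ l₀ →
        k l ≤ n - 1 ∧
        d l - d (l - 1) < ∑ j ∈ Finset.range (k l + 1), (n - j)) ∧
      (∑ l ∈ Finset.Icc 2 l₀, k l) < n :=
  exists_k_of_small_codim_general n l₀ d hmono hd
end

section
/- Let n ≥ 1 and let k_2, k_3, ..., k_{l_0} be integers with 0 ≤ k_l ≤ n−1 for each l and Σ_{l=2}^{l_0} k_l ≥ n. Then Σ_{l=2}^{l_0} Σ_{j=0}^{k_l − 1} (n − j) ≥ n(n+1)/2, where for k_l = 0 the inner sum is understood to be 0. -/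
/-! Since the summands `n - j` decrease in `j`, the partial sums `f m = ∑_{j<m} (n - j)` are
subadditive in `m`, so `∑ f (k_l) ≥ f (∑ k_l) ≥ f n = n(n+1)/2`. -/

open Finset

theorem Finset.sum_range_add_le_of_antitone {M : Type*} [AddCommMonoid M] [PartialOrder M]
    [IsOrderedAddMonoid M] {g : ℕ → M} (hg : Antitone g) (a b : ℕ) :
    ∑ j ∈ range (a + b), g j ≤ ∑ j ∈ range a, g j + ∑ j ∈ range b, g j := by
  rw [sum_range_add]
  gcongr with j
  exact hg (Nat.le_add_left j a)

theorem Finset.sum_range_sum_le_of_antitone {ι M : Type*} [AddCommMonoid M] [PartialOrder M]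
    [IsOrderedAddMonoid M] {g : ℕ → M} (hg : Antitone g) (s : Finset ι) (k : ι → ℕ) :
    ∑ j ∈ range (∑ i ∈ s, k i), g j ≤ ∑ i ∈ s, ∑ j ∈ range (k i), g j := by
  classical
  induction s using Finset.induction with
  | empty => simp
  | insert a s ha ih =>
    rw [sum_insert ha, sum_insert ha]
    exact (sum_range_add_le_of_antitone hg _ _).trans (add_le_add_right ih _)

theorem Nat.sum_range_sub_eq (n : ℕ) : ∑ j ∈ range n, (n - j) = n * (n + 1) / 2 := by
  calc ∑ j ∈ range n, (n - j) = ∑ j ∈ range n, (j + 1) := by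
        rw [← sum_range_reflect]
        exact sum_congr rfl fun j hj => by have := mem_range.1 hj; omega
    _ = ∑ j ∈ range (n + 1), j := by rw [sum_range_succ', add_zero]
    _ = n * (n + 1) / 2 := by rw [sum_range_id, Nat.add_sub_cancel, mul_comm]

theorem double_sum_ge_general (n l₀ : ℕ) (k : ℕ → ℕ)
    (hsum : n ≤ ∑ l ∈ Finset.Icc 2 l₀, k l) :
    n * (n + 1) / 2 ≤ ∑ l ∈ Finset.Icc 2 l₀, ∑ j ∈ Finset.range (k l), (n - j) := by
  have hg : Antitone fun j => n - j := fun _ _ h => Nat.sub_le_sub_left h n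
  calc n * (n + 1) / 2 = ∑ j ∈ range n, (n - j) := (Nat.sum_range_sub_eq n).symm
    _ ≤ ∑ j ∈ range (∑ l ∈ Icc 2 l₀, k l), (n - j) :=
        sum_le_sum_of_subset (range_subset_range.2 hsum)
    _ ≤ _ := sum_range_sum_le_of_antitone hg _ k

/-- If `n ≥ 1` and `k_2,...,k_{l_0}` are integers with `0 ≤ k_l ≤ n−1` for every `l`
and `∑_{l=2}^{l_0} k_l ≥ n`, then
`∑_{l=2}^{l_0} ∑_{j=0}^{k_l−1} (n−j) ≥ n(n+1)/2`,
the inner sum being `0` when `k_l = 0`. -/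
theorem double_sum_ge (n l₀ : ℕ) (hn : 1 ≤ n) (k : ℕ → ℕ)
    (hk : ∀ l, 2 ≤ l → l ≤ l₀ → k l ≤ n - 1)
    (hsum : n ≤ ∑ l ∈ Finset.Icc 2 l₀, k l) :
    n * (n + 1) / 2 ≤ ∑ l ∈ Finset.Icc 2 l₀, ∑ j ∈ Finset.range (k l), (n - j) :=
  double_sum_ge_general n l₀ k hsum
end
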